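/- If the system Σ_μ is stochastically mth mean stable, then the spectral radius of the matrix E[F₀^[m]] is less than one. (No parity or positivity assumption is needed for this implication.) -/

import Mathlib

open scoped BigOperators
open MeasureTheory ProbabilityTheory
open scoped Matrix.Norms.L2Operator

noncomputable section

open scoped BigOperators


/-- The multi-indices `α : Fin n → ℕ` with `∑ α i = m` form a finite type. -/
instance multiIdxFintype (n m : ℕ) : Fintype {α : Fin n → ℕ // ∑ i, α i = m} :=
  Fintype.subtype (Finset.Nat.antidiagonalTuple n m) fun _ =>
    Finset.Nat.mem_antidiagonalTuple

/-- The `m`-lift `x^[m]` of a vector `x ∈ ℝⁿ`: the entry indexed by the multi-index `α`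
is `√(m!/(α₁!⋯αₙ!)) · x₁^{α₁} ⋯ xₙ^{αₙ}`. -/
def mLift (n m : ℕ) (x : Fin n → ℝ) : {α : Fin n → ℕ // ∑ i, α i = m} → ℝ :=
  fun α => Real.sqrt (Nat.multinomial Finset.univ α.1) * ∏ i, x i ^ α.1 i

/-- `L` is the `m`-lift `A^[m]` of the matrix `A`, i.e. `(Ax)^[m] = L x^[m]` for all `x`. -/
def IsMatrixLift (n m : ℕ) (A : Matrix (Fin n) (Fin n) ℝ)
    (L : Matrix {α : Fin n → ℕ // ∑ i, α i = m} {α : Fin n → ℕ // ∑ i, α i = m} ℝ) : Prop :=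
  ∀ x : Fin n → ℝ, mLift n m (A.mulVec x) = L.mulVec (mLift n m x)

/-- The Euclidean norm of a vector in `ℝⁿ`. -/
def euclNorm {n : ℕ} (x : Fin n → ℝ) : ℝ := Real.sqrt (∑ i, x i ^ 2)

/-- The spectral radius of a real square matrix: the supremum of the absolute values of its
complex eigenvalues. -/
def specRad {N : Type*} [Fintype N] [DecidableEq N] (M : Matrix N N ℝ) : ENNReal :=
  spectralRadius ℂ (M.map (algebraMap ℝ ℂ))

/-- The (Borel product) measurable structure on matrices, entrywise. -/
instance matrixMeasurableSpace {m n α : Type*} [MeasurableSpace α] :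
    MeasurableSpace (Matrix m n α) :=
  (inferInstance : MeasurableSpace (m → n → α))

/-- `prodSeq F k ω = F_{k-1}(ω) ⋯ F_1(ω) F_0(ω)` (the empty product for `k = 0`). -/
def prodSeq {Ω : Type*} {n : ℕ} (F : ℕ → Ω → Matrix (Fin n) (Fin n) ℝ) :
    ℕ → Ω → Matrix (Fin n) (Fin n) ℝ
  | 0 => fun _ => 1
  | k + 1 => fun ω => F k ω * prodSeq F k ω

/-- The state `x_d(k) = F_{k-1} ⋯ F_1 F_0 x₀` of the system `Σ_μ`. -/
def xd {Ω : Type*} {n : ℕ} (F : ℕ → Ω → Matrix (Fin n) (Fin n) ℝ)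
    (x₀ : Fin n → ℝ) (k : ℕ) (ω : Ω) : Fin n → ℝ :=
  (prodSeq F k ω).mulVec x₀

/-- Entrywise expectation of a random matrix. -/
def matExpVal {Ω : Type*} [MeasurableSpace Ω] (P : Measure Ω) {N : Type*}
    (M : Ω → Matrix N N ℝ) : Matrix N N ℝ :=
  Matrix.of fun i j => ∫ ω, M ω i j ∂P

/-- Exponential `m`th mean stability of `Σ_μ`. -/
def ExpMeanStable {Ω : Type*} [MeasurableSpace Ω] (P : Measure Ω) {n : ℕ}
    (F : ℕ → Ω → Matrix (Fin n) (Fin n) ℝ) (m : ℕ) : Prop :=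
  ∃ a : ℝ, 0 < a ∧ ∃ b : ℝ, 0 < b ∧ ∀ x₀ : Fin n → ℝ, ∀ k : ℕ,
    (∫ ω, euclNorm (xd F x₀ k ω) ^ m ∂P) ≤ a * Real.exp (-b * k) * euclNorm x₀ ^ m

/-- Stochastic `m`th mean stability of `Σ_μ`. -/
def StochMeanStable {Ω : Type*} [MeasurableSpace Ω] (P : Measure Ω) {n : ℕ}
    (F : ℕ → Ω → Matrix (Fin n) (Fin n) ℝ) (m : ℕ) : Prop :=
  ∀ x₀ : Fin n → ℝ, Summable fun k => ∫ ω, euclNorm (xd F x₀ k ω) ^ m ∂P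

/-- Positivity of the system `Σ_μ`. -/
def PositiveSys {Ω : Type*} [MeasurableSpace Ω] (P : Measure Ω) {n : ℕ}
    (F : ℕ → Ω → Matrix (Fin n) (Fin n) ℝ) : Prop :=
  ∀ x₀ : Fin n → ℝ, (∀ i, 0 ≤ x₀ i) → ∀ k : ℕ, ∀ᵐ ω ∂P, ∀ i, 0 ≤ xd F x₀ k ω i

/-! Write `M = E[F₀^[m]]`. The lift is multiplicative, `(A x)^[m] = A^[m] x^[m]`, and `F_k` is
independent of `F_{k-1} ⋯ F₀`, so `E[x_d(k)^[m]] = M^k x₀^[m]`. Every entry of `x^[m]` is bounded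
by `‖x‖^m`, hence stability forces `M^k x₀^[m] → 0`. The lifted vectors span `ℝ^{n_m}` because
the monomials of degree `m` are linearly independent, so `M^k → 0`, and then
`ρ(M)^k ≤ ρ(M^k) ≤ ‖M^k‖ < 1` for large `k`. -/

open Matrix MvPolynomial Filter Topology

abbrev MultiIndex (n m : ℕ) := {α : Fin n → ℕ // ∑ i, α i = m}

namespace MultiIndex

variable {n m : ℕ}

def toFinsupp (β : MultiIndex n m) : Fin n →₀ ℕ := Finsupp.equivFunOnFinite.symm β.1

lemma toFinsupp_injective : Function.Injective (toFinsupp (n := n) (m := m)) :=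
  fun _ _ h => Subtype.ext (Finsupp.equivFunOnFinite.symm.injective h)

lemma mem_range_toFinsupp {d : Fin n →₀ ℕ} (hd : d.degree = m) :
    d ∈ Set.range (toFinsupp (n := n) (m := m)) := by
  refine ⟨⟨d, ?_⟩, Finsupp.equivFunOnFinite.symm_apply_apply d⟩
  rw [← hd, Finsupp.degree_eq_sum]

end MultiIndex

open MultiIndex

section Polynomial

variable {R : Type*} [CommRing R] {n m : ℕ}

lemma MvPolynomial.IsHomogeneous.eval_eq_sum_multiIndex {p : MvPolynomial (Fin n) R}
    (hp : p.IsHomogeneous m) (x : Fin n → R) :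
    eval x p = ∑ β : MultiIndex n m, p.coeff β.toFinsupp * ∏ i, x i ^ β.1 i := by
  classical
  have hsupp : p.support ⊆
      (Finset.univ : Finset (MultiIndex n m)).map ⟨toFinsupp, toFinsupp_injective⟩ := by
    intro d hd
    obtain ⟨β, rfl⟩ := mem_range_toFinsupp (m := m) <| by
      rw [Finsupp.degree_eq_weight_one]; exact hp (mem_support_iff.mp hd)
    simp
  rw [eval_eq', Finset.sum_subset hsupp fun d _ hd => by rw [notMem_support_iff.mp hd, zero_mul],
    Finset.sum_map]
  rfl

lemma eq_zero_of_forall_sum_mul_prod_pow_eq_zero [IsDomain R] [Infinite R]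
    {c : MultiIndex n m → R} (h : ∀ x : Fin n → R, ∑ β, c β * ∏ i, x i ^ β.1 i = 0) :
    c = 0 := by
  classical
  set q : MvPolynomial (Fin n) R := ∑ β, monomial β.toFinsupp (c β)
  have hq : q = 0 := MvPolynomial.funext fun x => by
    simpa [q, eval_monomial, Finsupp.prod_fintype, toFinsupp, mul_comm] using h x
  funext β
  have := congrArg (coeff β.toFinsupp) hq
  rwa [coeff_sum, Finset.sum_eq_single β (fun γ _ hγ => by
    rw [coeff_monomial, if_neg (toFinsupp_injective.ne hγ)]) (by simp), coeff_monomial,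
    if_pos rfl, coeff_zero] at this

end Polynomial

lemma Matrix.tendsto_zero_of_tendsto_mulVec_zero {ι R κ ι' : Type*} [Fintype ι] [DecidableEq ι]
    [CommRing R] [TopologicalSpace R] [IsTopologicalRing R] {l : Filter κ}
    {A : κ → Matrix ι' ι R} {s : Set (ι → R)} (hs : Submodule.span R s = ⊤)
    (h : ∀ v ∈ s, Tendsto (fun k => A k *ᵥ v) l (𝓝 0)) : Tendsto A l (𝓝 0) := by
  let V : Submodule R (ι → R) :=
    { carrier := {v | Tendsto (fun k => A k *ᵥ v) l (𝓝 0)}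
      add_mem' := fun hv hw => by simpa [mulVec_add] using hv.add hw
      zero_mem' := by simpa using tendsto_const_nhds
      smul_mem' := fun c v hv => by simpa [mulVec_smul] using hv.const_smul c }
  have hV : ∀ v, v ∈ V := fun v => ((Submodule.span_le (p := V)).mpr h) (hs ▸ Submodule.mem_top)
  refine tendsto_pi_nhds.mpr fun i => tendsto_pi_nhds.mpr fun j => ?_
  simpa using (tendsto_pi_nhds.mp (hV (Pi.single j 1))) i

lemma spectrum.spectralRadius_lt_one_of_tendsto_pow {𝕜 A : Type*} [NormedField 𝕜] [NormedRing A]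
    [NormedAlgebra 𝕜 A] [CompleteSpace A] {a : A} (h : Tendsto (a ^ ·) atTop (𝓝 0)) :
    spectralRadius 𝕜 a < 1 := by
  obtain ⟨N, hN⟩ := ((h.norm.mul_const ‖(1 : A)‖).eventually
    (gt_mem_nhds (by simp : ‖(0 : A)‖ * ‖(1 : A)‖ < 1))).exists_forall_of_atTop
  have hbound : spectralRadius 𝕜 a ^ (N + 1) < 1 := calc
    spectralRadius 𝕜 a ^ (N + 1) ≤ spectralRadius 𝕜 (a ^ (N + 1)) :=
      spectrum.spectralRadius_pow_le a _ N.succ_ne_zero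
    _ ≤ ‖a ^ (N + 1)‖₊ * ‖(1 : A)‖₊ := by
      simpa using spectrum.spectralRadius_le_pow_nnnorm_pow_one_div 𝕜 (a ^ (N + 1)) 0
    _ < 1 := by
      rw [← ENNReal.coe_mul, ← ENNReal.coe_one, ENNReal.coe_lt_coe, ← NNReal.coe_lt_coe]
      simpa using hN (N + 1) N.le_succ
  by_contra hge
  exact hbound.not_ge (one_le_pow₀ (not_lt.mp hge))

lemma specRad_lt_one_of_tendsto_pow {ι : Type*} [Fintype ι] [DecidableEq ι]
    {M : Matrix ι ι ℝ} (h : Tendsto (M ^ ·) atTop (𝓝 0)) : specRad M < 1 := by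
  refine spectrum.spectralRadius_lt_one_of_tendsto_pow ?_
  have hmap := ((continuous_id.matrix_map Complex.continuous_ofReal).tendsto 0).comp h
  simp only [Function.comp_def, ← Matrix.map_pow M (algebraMap ℝ ℂ)] at hmap ⊢
  simpa using hmap

section Lift

variable {n m : ℕ}

lemma mLift_eq_mul_prod (x : Fin n → ℝ) (β : MultiIndex n m) :
    mLift n m x β = √(Nat.multinomial Finset.univ β.1) * ∏ i, x i ^ β.1 i := rfl

lemma sqrt_multinomial_ne_zero (β : Fin n → ℕ) : √(Nat.multinomial Finset.univ β : ℝ) ≠ 0 :=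
  Real.sqrt_ne_zero'.mpr (mod_cast Nat.multinomial_pos _ _)

@[fun_prop]
lemma continuous_mLift : Continuous (mLift n m) :=
  continuous_pi fun α => by simp only [mLift_eq_mul_prod]; fun_prop

lemma sum_mLift_sq (x : Fin n → ℝ) :
    ∑ α : MultiIndex n m, mLift n m x α ^ 2 = (∑ i, x i ^ 2) ^ m := by
  classical
  rw [Finset.sum_pow_eq_sum_piAntidiag,
    Finset.sum_subtype (p := fun a : Fin n → ℕ => ∑ i, a i = m) _ (by simp)]
  refine Finset.sum_congr rfl fun α _ => ?_
  rw [mLift, mul_pow, Real.sq_sqrt (Nat.cast_nonneg _), ← Finset.prod_pow]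
  simp only [← pow_mul, mul_comm]

lemma abs_mLift_le (x : Fin n → ℝ) (α : MultiIndex n m) :
    |mLift n m x α| ≤ euclNorm x ^ m := by
  have hsq : mLift n m x α ^ 2 ≤ (euclNorm x ^ m) ^ 2 := by
    rw [← pow_mul, mul_comm, pow_mul, euclNorm, Real.sq_sqrt (by positivity), ← sum_mLift_sq]
    exact Finset.single_le_sum (f := fun β => mLift n m x β ^ 2)
      (fun _ _ => sq_nonneg _) (Finset.mem_univ α)
  exact abs_le_of_sq_le_sq hsq (pow_nonneg (Real.sqrt_nonneg _) m)

@[fun_prop]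
lemma continuous_euclNorm : Continuous (euclNorm (n := n)) := by
  unfold euclNorm
  fun_prop

lemma euclNorm_eq_norm (x : Fin n → ℝ) : euclNorm x = ‖WithLp.toLp 2 x‖ := by
  simp [EuclideanSpace.norm_eq, euclNorm]

lemma euclNorm_mulVec_le (A : Matrix (Fin n) (Fin n) ℝ) (x : Fin n → ℝ) :
    euclNorm (A *ᵥ x) ≤ ‖A‖ * euclNorm x := by
  simpa [euclNorm_eq_norm] using Matrix.l2_opNorm_mulVec A (WithLp.toLp 2 x)

lemma span_range_mLift : Submodule.span ℝ (Set.range (mLift n m)) = ⊤ := by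
  by_contra hne
  obtain ⟨f, hf, hle⟩ := Submodule.exists_le_ker_of_lt_top _ (lt_top_iff_ne_top.mpr hne)
  have hcoeff : (fun β => f (Pi.single β 1) * √(Nat.multinomial Finset.univ β.1)) = 0 := by
    refine eq_zero_of_forall_sum_mul_prod_pow_eq_zero fun x => ?_
    have hx : f (mLift n m x) = 0 := hle (Submodule.subset_span ⟨x, rfl⟩)
    have hsingle : ∀ β : MultiIndex n m, (fun γ => if β = γ then (1 : ℝ) else 0) = Pi.single β 1 :=
      fun β => funext fun γ => by simp [Pi.single_apply, eq_comm]
    rw [LinearMap.pi_apply_eq_sum_univ f] at hx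
    simpa [hsingle, mLift_eq_mul_prod, mul_assoc, mul_comm, mul_left_comm] using hx
  refine hf (LinearMap.pi_ext' fun β => LinearMap.ext_ring ?_)
  exact (mul_eq_zero.mp (congrFun hcoeff β)).resolve_right (sqrt_multinomial_ne_zero _)

/- `(A x)^[m]_α` is `√(m!/α!)` times a homogeneous polynomial of degree `m` in `x`, and each
monomial `x^β` of degree `m` is `x^[m]_β / √(m!/β!)`. -/
lemma exists_isMatrixLift (A : Matrix (Fin n) (Fin n) ℝ) : ∃ K, IsMatrixLift n m A K := by
  let p : MultiIndex n m → MvPolynomial (Fin n) ℝ :=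
    fun α => ∏ i, (∑ j, C (A i j) * X j) ^ α.1 i
  have hlin : ∀ i, (∑ j, C (A i j) * X j : MvPolynomial (Fin n) ℝ).IsHomogeneous 1 :=
    fun i => IsHomogeneous.sum _ _ 1 fun j _ => isHomogeneous_C_mul_X _ _
  have hp : ∀ α, (p α).IsHomogeneous m := fun α => by
    simpa [α.2] using IsHomogeneous.prod Finset.univ _ (fun i => α.1 i) fun i _ => by
      simpa using (hlin i).pow (α.1 i)
  refine ⟨Matrix.of fun α β => √(Nat.multinomial Finset.univ α.1) * (p α).coeff (toFinsupp β) /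
    √(Nat.multinomial Finset.univ β.1), fun x => funext fun α => ?_⟩
  have hpx : mLift n m (A *ᵥ x) α = √(Nat.multinomial Finset.univ α.1) * eval x (p α) := by
    simp [mLift_eq_mul_prod, p, mulVec, dotProduct]
  rw [hpx, (hp α).eval_eq_sum_multiIndex, Finset.mul_sum]
  refine Finset.sum_congr rfl fun β _ => ?_
  simp only [mLift_eq_mul_prod, of_apply]
  field_simp [sqrt_multinomial_ne_zero β.1]

lemma exists_finsupp_sum_smul_mLift_eq (v : MultiIndex n m → ℝ) :
    ∃ c : (Fin n → ℝ) →₀ ℝ, (c.sum fun y a => a • mLift n m y) = v :=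
  Finsupp.mem_span_range_iff_exists_finsupp.mp (by rw [span_range_mLift]; trivial)

/- Expanding `Pi.single β 1` over lifted vectors gives a formula for the lift of a matrix that is
visibly continuous in the matrix. -/
def mLiftCoeffs (β : MultiIndex n m) : (Fin n → ℝ) →₀ ℝ :=
  (exists_finsupp_sum_smul_mLift_eq (Pi.single β 1)).choose

lemma sum_mLiftCoeffs_smul (β : MultiIndex n m) :
    ((mLiftCoeffs β).sum fun y a => a • mLift n m y) = Pi.single β 1 :=
  (exists_finsupp_sum_smul_mLift_eq (Pi.single β 1)).choose_spec

lemma Matrix.apply_eq_sum_mLiftCoeffs (K : Matrix (MultiIndex n m) (MultiIndex n m) ℝ)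
    (α β : MultiIndex n m) :
    K α β = (mLiftCoeffs β).sum fun y a => a * (K *ᵥ mLift n m y) α := by
  have hcol := congrFun (congrArg (K *ᵥ ·) (sum_mLiftCoeffs_smul β)) α
  simp only [mulVec_single_one, Finsupp.sum, mulVec_sum, mulVec_smul] at hcol
  simpa [Finset.sum_apply, Finsupp.sum] using hcol.symm

def liftMatrix (n m : ℕ) (A : Matrix (Fin n) (Fin n) ℝ) :
    Matrix (MultiIndex n m) (MultiIndex n m) ℝ :=
  Matrix.of fun α β => (mLiftCoeffs β).sum fun y a => a * mLift n m (A *ᵥ y) α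

lemma IsMatrixLift.eq_liftMatrix {A : Matrix (Fin n) (Fin n) ℝ}
    {K : Matrix (MultiIndex n m) (MultiIndex n m) ℝ} (h : IsMatrixLift n m A K) :
    K = liftMatrix n m A := by
  ext α β
  rw [K.apply_eq_sum_mLiftCoeffs α β, liftMatrix, of_apply]
  exact Finsupp.sum_congr fun y _ => by rw [← h y]

lemma isMatrixLift_liftMatrix (A : Matrix (Fin n) (Fin n) ℝ) :
    IsMatrixLift n m A (liftMatrix n m A) := by
  obtain ⟨K, hK⟩ := exists_isMatrixLift (m := m) A
  rwa [← hK.eq_liftMatrix]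

@[fun_prop]
lemma continuous_liftMatrix : Continuous (liftMatrix n m) := by
  refine continuous_pi fun α => continuous_pi fun β => ?_
  simp only [liftMatrix, of_apply, Finsupp.sum]
  fun_prop

lemma abs_liftMatrix_le (A : Matrix (Fin n) (Fin n) ℝ) (α β : MultiIndex n m) :
    |liftMatrix n m A α β| ≤
      ((mLiftCoeffs β).sum fun y a => |a| * euclNorm y ^ m) * ‖A‖ ^ m := by
  simp only [liftMatrix, of_apply, Finsupp.sum, Finset.sum_mul]
  refine (Finset.abs_sum_le_sum_abs _ _).trans (Finset.sum_le_sum fun y _ => ?_)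
  rw [abs_mul, mul_assoc, ← mul_pow, mul_comm (euclNorm y)]
  gcongr
  exact (abs_mLift_le _ _).trans
    (pow_le_pow_left₀ (Real.sqrt_nonneg _) (euclNorm_mulVec_le A y) m)

end Lift

instance Matrix.borelSpace {ι κ : Type*} [Countable ι] [Countable κ] :
    BorelSpace (Matrix ι κ ℝ) :=
  inferInstanceAs (BorelSpace (ι → κ → ℝ))

instance Matrix.secondCountableTopology {ι κ : Type*} [Countable ι] [Countable κ] :
    SecondCountableTopology (Matrix ι κ ℝ) :=
  inferInstanceAs (SecondCountableTopology (ι → κ → ℝ))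

instance Matrix.measurableMul₂ {ι : Type*} [Fintype ι] : MeasurableMul₂ (Matrix ι ι ℝ) :=
  ⟨continuous_mul.measurable⟩

section RandomProducts

variable {Ω : Type*} {n : ℕ}

lemma prodSeq_congr {Ω' : Type*} {F : ℕ → Ω → Matrix (Fin n) (Fin n) ℝ}
    {G : ℕ → Ω' → Matrix (Fin n) (Fin n) ℝ} {ω : Ω} {ω' : Ω'} {k : ℕ}
    (h : ∀ j < k, F j ω = G j ω') : prodSeq F k ω = prodSeq G k ω' := by
  induction k with
  | zero => rfl
  | succ k ih =>
    simp only [prodSeq, h k k.lt_succ_self, ih fun j hj => h j (hj.trans k.lt_succ_self)]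

lemma xd_succ (F : ℕ → Ω → Matrix (Fin n) (Fin n) ℝ) (x₀ : Fin n → ℝ) (k : ℕ) (ω : Ω) :
    xd F x₀ (k + 1) ω = F k ω *ᵥ xd F x₀ k ω :=
  (mulVec_mulVec _ _ _).symm

variable [MeasurableSpace Ω] {P : Measure Ω} {F : ℕ → Ω → Matrix (Fin n) (Fin n) ℝ}

lemma measurable_prodSeq (hF : ∀ k, Measurable (F k)) (k : ℕ) : Measurable (prodSeq F k) := by
  induction k with
  | zero => exact measurable_const
  | succ k ih => exact (hF k).mul ih

lemma aemeasurable_prodSeq (hF : ∀ k, AEMeasurable (F k) P) (k : ℕ) :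
    AEMeasurable (prodSeq F k) P := by
  induction k with
  | zero => exact aemeasurable_const
  | succ k ih => exact (hF k).mul ih

lemma ProbabilityTheory.iIndepFun.indepFun_prodSeq (hind : iIndepFun F P)
    (hF : ∀ k, AEMeasurable (F k) P) (k : ℕ) : IndepFun (F k) (prodSeq F k) P := by
  classical
  let G : ℕ → (Finset.range k → Matrix (Fin n) (Fin n) ℝ) → Matrix (Fin n) (Fin n) ℝ :=
    fun j v => if h : j < k then v ⟨j, Finset.mem_range.mpr h⟩ else 1
  have hG : ∀ j, Measurable (G j) := fun j => by
    by_cases h : j < k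
    · simpa [G, h] using measurable_pi_apply _
    · simp [G, h]
  have := (hind.indepFun_finset₀ {k} (Finset.range k) (by simp) hF).comp
    (measurable_pi_apply ⟨k, Finset.mem_singleton_self k⟩) (measurable_prodSeq hG k)
  refine this.congr (.of_forall fun _ => rfl) (.of_forall fun ω => prodSeq_congr fun j hj => ?_)
  simp [G, hj]

variable {m : ℕ}

lemma integrable_norm_pow_of_identDistrib (hid : ∀ k, IdentDistrib (F k) (F 0) P P)
    (hint : Integrable (fun ω => ‖F 0 ω‖ ^ m) P) (k : ℕ) :
    Integrable (fun ω => ‖F k ω‖ ^ m) P :=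
  ((hid k).comp (show Measurable fun A => ‖A‖ ^ m by fun_prop)).integrable_iff.mpr hint

lemma integrable_liftMatrix_apply {G : Ω → Matrix (Fin n) (Fin n) ℝ} (hG : AEMeasurable G P)
    (hint : Integrable (fun ω => ‖G ω‖ ^ m) P) (α β : MultiIndex n m) :
    Integrable (fun ω => liftMatrix n m (G ω) α β) P :=
  (hint.const_mul _).mono' (by fun_prop)
    (.of_forall fun ω => (Real.norm_eq_abs _).trans_le (abs_liftMatrix_le _ α β))

lemma integrable_euclNorm_xd_pow [IsFiniteMeasure P] (hind : iIndepFun F P)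
    (hF : ∀ k, AEMeasurable (F k) P) (hint : ∀ k, Integrable (fun ω => ‖F k ω‖ ^ m) P)
    (x₀ : Fin n → ℝ) (k : ℕ) : Integrable (fun ω => euclNorm (xd F x₀ k ω) ^ m) P := by
  induction k with
  | zero => simp [xd, prodSeq]
  | succ k ih =>
    have hprod : Integrable (fun ω => ‖F k ω‖ ^ m * euclNorm (xd F x₀ k ω) ^ m) P :=
      ((hind.indepFun_prodSeq hF k).comp (show Measurable fun A => ‖A‖ ^ m by fun_prop)
        (show Measurable fun A => euclNorm (A *ᵥ x₀) ^ m by fun_prop)).integrable_mul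
        (hint k) ih
    have hmeas : AEStronglyMeasurable (fun ω => euclNorm (xd F x₀ (k + 1) ω) ^ m) P :=
      (show Measurable fun A => euclNorm (A *ᵥ x₀) ^ m by fun_prop).comp_aemeasurable
        (aemeasurable_prodSeq hF (k + 1)) |>.aestronglyMeasurable
    refine hprod.mono' hmeas (.of_forall fun ω => ?_)
    rw [Real.norm_of_nonneg (by unfold euclNorm; positivity), xd_succ, ← mul_pow]
    exact pow_le_pow_left₀ (Real.sqrt_nonneg _) (euclNorm_mulVec_le _ _) m

lemma integrable_mLift_xd [IsFiniteMeasure P] (hind : iIndepFun F P)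
    (hF : ∀ k, AEMeasurable (F k) P) (hint : ∀ k, Integrable (fun ω => ‖F k ω‖ ^ m) P)
    (x₀ : Fin n → ℝ) (k : ℕ) (β : MultiIndex n m) :
    Integrable (fun ω => mLift n m (xd F x₀ k ω) β) P :=
  (integrable_euclNorm_xd_pow hind hF hint x₀ k).mono'
    ((show Measurable fun A => mLift n m (A *ᵥ x₀) β by fun_prop).comp_aemeasurable
      (aemeasurable_prodSeq hF k)).aestronglyMeasurable
    (.of_forall fun ω => (Real.norm_eq_abs _).trans_le (abs_mLift_le _ _))

lemma integral_mLift_xd [IsProbabilityMeasure P] (hind : iIndepFun F P)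
    (hid : ∀ k, IdentDistrib (F k) (F 0) P P) (hint : Integrable (fun ω => ‖F 0 ω‖ ^ m) P)
    (x₀ : Fin n → ℝ) (k : ℕ) :
    (fun α => ∫ ω, mLift n m (xd F x₀ k ω) α ∂P) =
      matExpVal P (fun ω => liftMatrix n m (F 0 ω)) ^ k *ᵥ mLift n m x₀ := by
  set M := matExpVal P (fun ω => liftMatrix n m (F 0 ω))
  have hF : ∀ k, AEMeasurable (F k) P := fun k => (hid k).aemeasurable_fst
  have hintF := integrable_norm_pow_of_identDistrib hid hint
  have hindep : ∀ k α β, IndepFun (fun ω => liftMatrix n m (F k ω) α β)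
      (fun ω => mLift n m (xd F x₀ k ω) β) P := fun k α β =>
    (hind.indepFun_prodSeq hF k).comp (φ := fun A => liftMatrix n m A α β)
      (ψ := fun A => mLift n m (A *ᵥ x₀) β) (by fun_prop) (by fun_prop)
  induction k with
  | zero => funext α; simp [xd, prodSeq]
  | succ k ih =>
    funext α
    have hLint := integrable_liftMatrix_apply (hF k) (hintF k) α
    have hYint := integrable_mLift_xd hind hF hintF x₀ k
    calc ∫ ω, mLift n m (xd F x₀ (k + 1) ω) α ∂P
        = ∑ β, ∫ ω, liftMatrix n m (F k ω) α β * mLift n m (xd F x₀ k ω) β ∂P := by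
          simp_rw [xd_succ, isMatrixLift_liftMatrix _ _, mulVec, dotProduct]
          exact integral_finsetSum _ fun β _ =>
            (hindep k α β).integrable_mul (hLint β) (hYint β)
      _ = ∑ β, M α β * (M ^ k *ᵥ mLift n m x₀) β := by
          refine Finset.sum_congr rfl fun β _ => ?_
          have hEL : ∫ ω, liftMatrix n m (F k ω) α β ∂P = M α β :=
            ((hid k).comp (show Measurable fun A => liftMatrix n m A α β by fun_prop)).integral_eq
          rw [(hindep k α β).integral_fun_mul_eq_mul_integral (hLint β).aestronglyMeasurable
            (hYint β).aestronglyMeasurable, hEL, ← ih]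
      _ = (M ^ (k + 1) *ᵥ mLift n m x₀) α := by
          rw [pow_succ', ← mulVec_mulVec]
          rfl

end RandomProducts

lemma tendsto_pow_mulVec_mLift_of_stochMeanStable {Ω : Type*} [MeasurableSpace Ω] {P : Measure Ω}
    [IsProbabilityMeasure P] {n m : ℕ} {F : ℕ → Ω → Matrix (Fin n) (Fin n) ℝ}
    (hind : iIndepFun F P) (hid : ∀ k, IdentDistrib (F k) (F 0) P P)
    (hint : Integrable (fun ω => ‖F 0 ω‖ ^ m) P) (hstoch : StochMeanStable P F m)
    (x₀ : Fin n → ℝ) :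
    Tendsto (fun k => matExpVal P (fun ω => liftMatrix n m (F 0 ω)) ^ k *ᵥ mLift n m x₀)
      atTop (𝓝 0) := by
  refine tendsto_pi_nhds.mpr fun α =>
    squeeze_zero_norm (fun k => ?_) (hstoch x₀).tendsto_atTop_zero
  rw [← integral_mLift_xd hind hid hint x₀ k]
  exact norm_integral_le_of_norm_le
    (integrable_euclNorm_xd_pow hind (fun k => (hid k).aemeasurable_fst)
      (integrable_norm_pow_of_identDistrib hid hint) x₀ k)
    (.of_forall fun ω => (Real.norm_eq_abs _).trans_le (abs_mLift_le _ _))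

theorem specRad_lt_one_of_stochMeanStable_general {Ω : Type*} [MeasurableSpace Ω]
    (P : Measure Ω) [IsProbabilityMeasure P] (n m : ℕ)
    (F : ℕ → Ω → Matrix (Fin n) (Fin n) ℝ)
    (hind : iIndepFun F P)
    (hid : ∀ k, IdentDistrib (F k) (F 0) P P)
    (hint : Integrable (fun ω => ‖F 0 ω‖ ^ m) P)
    (L : Ω → Matrix {α : Fin n → ℕ // ∑ i, α i = m} {α : Fin n → ℕ // ∑ i, α i = m} ℝ)
    (hL : ∀ ω, IsMatrixLift n m (F 0 ω) (L ω))
    (hstoch : StochMeanStable P F m) :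
    specRad (matExpVal P L) < 1 := by
  obtain rfl : L = fun ω => liftMatrix n m (F 0 ω) := funext fun ω => (hL ω).eq_liftMatrix
  refine specRad_lt_one_of_tendsto_pow
    (Matrix.tendsto_zero_of_tendsto_mulVec_zero span_range_mLift ?_)
  rintro _ ⟨x₀, rfl⟩
  exact tendsto_pow_mulVec_mLift_of_stochMeanStable hind hid hint hstoch x₀

/-- If the system `Σ_μ` is stochastically `m`th mean stable, then the
spectral radius of `E[F₀^[m]]` is less than one (no parity or positivity assumption). -/
theorem specRad_lt_one_of_stochMeanStable {Ω : Type*} [MeasurableSpace Ω]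
    (P : Measure Ω) [IsProbabilityMeasure P] (n m : ℕ) (hm : 0 < m)
    (F : ℕ → Ω → Matrix (Fin n) (Fin n) ℝ)
    (hind : iIndepFun F P)
    (hid : ∀ k, IdentDistrib (F k) (F 0) P P)
    (hint : Integrable (fun ω => ‖F 0 ω‖ ^ m) P)
    (L : Ω → Matrix {α : Fin n → ℕ // ∑ i, α i = m} {α : Fin n → ℕ // ∑ i, α i = m} ℝ)
    (hL : ∀ ω, IsMatrixLift n m (F 0 ω) (L ω))
    (hstoch : StochMeanStable P F m) :
    specRad (matExpVal P L) < 1 :=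
  specRad_lt_one_of_stochMeanStable_general P n m F hind hid hint L hL hstoch

end
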